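/- arXiv:2507.23025 — 3 statements merged into one kernel-verified Lean document; each statement's English description precedes it below -/
import Mathlib

section
/- Let A⊙ = (a⊙_{ij}) and B⊙ = (b⊙_{ij}) be m×n matrices of nonnegative integers, indexed by i = 1,…,m and j = 1,…,n. There exists a finite simple directed graph G whose joint degree matrix equals A⊙ and whose degree correlation matrix equals B⊙ (i.e., every vertex of G has out-degree in {1,…,m} and in-degree in {1,…,n}, for each i,j exactly b⊙_{ij} vertices have out-degree i and in-degree j, and exactly a⊙_{ij} edges (v₁,v₂) satisfy d⁺(v₁)=i and d⁻(v₂)=j) if and only if for all i = 1,…,m and j = 1,…,n: (1) Σ_{j'} a⊙_{ij'} = i·Σ_{j'} b⊙_{ij'}; (2) Σ_{i'} a⊙_{i'j} = j·Σ_{i'} b⊙_{i'j}; and (3) a⊙_{ij} + b⊙_{ij} ≤ (Σ_{j'} b⊙_{ij'})·(Σ_{i'} b⊙_{i'j}). -/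
/-- A finite simple directed graph: a finite vertex set, and an edge set of
ordered pairs of vertices with no self-loops. -/
structure FinDigraph where
  verts : Finset ℕ
  edges : Finset (ℕ × ℕ)
  mem_verts : ∀ e ∈ edges, e.1 ∈ verts ∧ e.2 ∈ verts
  no_loops : ∀ e ∈ edges, e.1 ≠ e.2

/-- Out-degree of a vertex: the number of edges leaving it. -/
def FinDigraph.outDeg (G : FinDigraph) (v : ℕ) : ℕ :=
  (G.edges.filter (fun e => e.1 = v)).card

/-- In-degree of a vertex: the number of edges entering it. -/
def FinDigraph.inDeg (G : FinDigraph) (v : ℕ) : ℕ :=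
  (G.edges.filter (fun e => e.2 = v)).card

/-- Joint degree matrix entry `a i j`: the number of edges `(v₁, v₂)` with
`d⁺(v₁) = i` and `d⁻(v₂) = j`. -/
def FinDigraph.jdm (G : FinDigraph) (i j : ℕ) : ℕ :=
  (G.edges.filter (fun e => G.outDeg e.1 = i ∧ G.inDeg e.2 = j)).card

/-- Degree correlation matrix entry `b i j`: the number of vertices `v` with
`d⁺(v) = i` and `d⁻(v) = j`. -/
def FinDigraph.dcm (G : FinDigraph) (i j : ℕ) : ℕ :=
  (G.verts.filter (fun v => G.outDeg v = i ∧ G.inDeg v = j)).card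

/-!
Necessity is double counting: the edges whose tail has out-degree `i` number `i` times the
vertices of out-degree `i`, and the edges of block `(i, j)` together with the loops at the
vertices of class `(i, j)` are distinct pairs in (out-degree `i`) × (in-degree `j`).

For sufficiency, take `b⊙_{ij}` vertices labelled `(i, j)` and, using (3), any loopless edge set
with `a⊙_{ij}` edges from out-label `i` to in-label `j`. Degrees need not match labels yet, but
by (1) the out-degrees in each out-label class `i` sum to `i` times its size. So if some vertex
`v` has out-degree above its label, a vertex `v'` of the same class lies below it, and then
`v` has an out-neighbour `w ≠ v'` that is not one of `v'`; replacing `(v, w)` by `(v', w)`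
keeps the edge counts between labels and all in-degrees, and lowers the total excess of
out-degrees over labels. Repeating this, and then the same on the reversed graph for
in-degrees (moving heads keeps out-degrees), yields the graph.
-/

open Finset

namespace Finset

variable {α β : Type*}

theorem card_filter_eq_sum_card_filter_and [DecidableEq β] {s : Finset α} {t : Finset β}
    {g : α → β} (p : α → Prop) [DecidablePred p] (hg : ∀ x ∈ s, g x ∈ t) :
    #{x ∈ s | p x} = ∑ y ∈ t, #{x ∈ s | p x ∧ g x = y} := by
  rw [card_eq_sum_card_fiberwise fun x hx => hg x (mem_of_mem_filter x hx)]
  simp only [filter_filter]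

theorem card_filter_eq_sum_card_filter_and_left [DecidableEq β] {s : Finset α} {t : Finset β}
    {g : α → β} (p : α → Prop) [DecidablePred p] (hg : ∀ x ∈ s, g x ∈ t) :
    #{x ∈ s | p x} = ∑ y ∈ t, #{x ∈ s | g x = y ∧ p x} := by
  rw [card_filter_eq_sum_card_filter_and p hg]
  simp only [and_comm]

theorem card_filter_eq_of_map_eq {s t : Finset α} {φ : α → β}
    (h : s.val.map φ = t.val.map φ) (q : β → Prop) [DecidablePred q] :
    #{x ∈ s | q (φ x)} = #{x ∈ t | q (φ x)} := by
  simp only [card_def, filter_val]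
  simpa [Multiset.filter_map] using congrArg (fun m => Multiset.card (m.filter q)) h

variable [DecidableEq α] {s : Finset α} {x y : α}

theorem map_val_insert_erase (φ : α → β) (hx : x ∉ s) (hy : y ∈ s) (hxy : φ x = φ y) :
    (insert x (s.erase y)).val.map φ = s.val.map φ := by
  conv_rhs => rw [← insert_erase hy]
  rw [insert_val_of_notMem (fun h => hx (mem_of_mem_erase h)),
    insert_val_of_notMem (notMem_erase y s), Multiset.map_cons, Multiset.map_cons, hxy]

theorem card_filter_insert_erase_add (p : α → Prop) [DecidablePred p] (hx : x ∉ s)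
    (hy : y ∈ s) :
    #{z ∈ insert x (s.erase y) | p z} + (if p y then 1 else 0)
      = #{z ∈ s | p z} + (if p x then 1 else 0) := by
  rw [card_filter, card_filter, sum_insert (fun h => hx (mem_of_mem_erase h)),
    ← sum_erase_add s _ hy]
  ring

theorem card_filter_offDiag_add_card_filter [DecidableEq β] (f g : α → β) (i j : β) :
    #{e ∈ s.offDiag | f e.1 = i ∧ g e.2 = j} + #{v ∈ s | f v = i ∧ g v = j}
      = #{v ∈ s | f v = i} * #{v ∈ s | g v = j} := by
  have hdiag : #{e ∈ s.diag | f e.1 = i ∧ g e.2 = j} = #{v ∈ s | f v = i ∧ g v = j} := by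
    rw [diag, filter_map, card_map]
    rfl
  rw [← hdiag, add_comm, ← card_union_of_disjoint
    (disjoint_filter_filter (disjoint_diag_offDiag s)), ← filter_union, diag_union_offDiag,
    filter_product (fun v => f v = i) (fun v => g v = j), card_product]

end Finset

namespace FinDigraph

def ofSubsetOffDiag (V : Finset ℕ) (E : Finset (ℕ × ℕ)) (h : E ⊆ V.offDiag) :
    FinDigraph where
  verts := V
  edges := E
  mem_verts _ he := ⟨(mem_offDiag.1 (h he)).1, (mem_offDiag.1 (h he)).2.1⟩
  no_loops _ he := (mem_offDiag.1 (h he)).2.2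

def reverse (G : FinDigraph) : FinDigraph where
  verts := G.verts
  edges := G.edges.map (Equiv.prodComm ℕ ℕ).toEmbedding
  mem_verts _ he := by
    obtain ⟨a, ha, rfl⟩ := mem_map.1 he
    exact (G.mem_verts a ha).symm
  no_loops _ he := by
    obtain ⟨a, ha, rfl⟩ := mem_map.1 he
    exact (G.no_loops a ha).symm

/-- The joint degree matrix with the degrees replaced by the labellings `f` and `g`. -/
def blockCount (G : FinDigraph) (f g : ℕ → ℕ) (i j : ℕ) : ℕ :=
  #{e ∈ G.edges | f e.1 = i ∧ g e.2 = j}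

variable (G : FinDigraph)

theorem edges_subset_offDiag : G.edges ⊆ G.verts.offDiag := fun e he =>
  mem_offDiag.2 ⟨(G.mem_verts e he).1, (G.mem_verts e he).2, G.no_loops e he⟩

theorem card_filter_reverse_edges (p : ℕ × ℕ → Prop) [DecidablePred p] :
    #{e ∈ G.reverse.edges | p e} = #{e ∈ G.edges | p e.swap} := by
  rw [reverse, filter_map, card_map]
  rfl

theorem outDeg_reverse : G.reverse.outDeg = G.inDeg :=
  funext fun _ => G.card_filter_reverse_edges _

theorem inDeg_reverse : G.reverse.inDeg = G.outDeg :=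
  funext fun _ => G.card_filter_reverse_edges _

theorem sum_outDeg_filter (f : ℕ → ℕ) (i : ℕ) :
    ∑ v ∈ G.verts with f v = i, G.outDeg v = #{e ∈ G.edges | f e.1 = i} := by
  rw [card_eq_sum_card_fiberwise (s := {e ∈ G.edges | f e.1 = i}) (f := Prod.fst)
    (t := {v ∈ G.verts | f v = i}) fun e he =>
    mem_filter.2 ⟨(G.mem_verts e (mem_filter.1 he).1).1, (mem_filter.1 he).2⟩]
  refine sum_congr rfl fun v hv => ?_
  rw [outDeg, filter_filter]
  exact congrArg card <| filter_congr fun e _ =>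
    ⟨fun h => ⟨h ▸ (mem_filter.1 hv).2, h⟩, And.right⟩

theorem sum_inDeg_filter (g : ℕ → ℕ) (j : ℕ) :
    ∑ v ∈ G.verts with g v = j, G.inDeg v = #{e ∈ G.edges | g e.2 = j} := by
  rw [← outDeg_reverse]
  exact (G.reverse.sum_outDeg_filter g j).trans (G.card_filter_reverse_edges _)

variable {G}

theorem sum_blockCount_right {J : Finset ℕ} {g : ℕ → ℕ} (hg : ∀ v ∈ G.verts, g v ∈ J)
    (f : ℕ → ℕ) (i : ℕ) :
    ∑ j ∈ J, G.blockCount f g i j = #{e ∈ G.edges | f e.1 = i} :=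
  (card_filter_eq_sum_card_filter_and _ fun e he => hg _ (G.mem_verts e he).2).symm

theorem sum_blockCount_left {I : Finset ℕ} {f : ℕ → ℕ} (hf : ∀ v ∈ G.verts, f v ∈ I)
    (g : ℕ → ℕ) (j : ℕ) :
    ∑ i ∈ I, G.blockCount f g i j = #{e ∈ G.edges | g e.2 = j} :=
  (card_filter_eq_sum_card_filter_and_left _ fun e he => hf _ (G.mem_verts e he).1).symm

theorem jdm_eq_blockCount_of_degrees {f g : ℕ → ℕ}
    (hdeg : ∀ v ∈ G.verts, G.outDeg v = f v ∧ G.inDeg v = g v) (i j : ℕ) :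
    G.jdm i j = G.blockCount f g i j :=
  congrArg card <| filter_congr fun e he => by
    rw [(hdeg _ (G.mem_verts e he).1).1, (hdeg _ (G.mem_verts e he).2).2]

theorem dcm_eq_of_degrees {f g : ℕ → ℕ}
    (hdeg : ∀ v ∈ G.verts, G.outDeg v = f v ∧ G.inDeg v = g v) (i j : ℕ) :
    G.dcm i j = #{v ∈ G.verts | f v = i ∧ g v = j} :=
  congrArg card <| filter_congr fun v hv => by rw [(hdeg v hv).1, (hdeg v hv).2]

section Necessity

variable {I J : Finset ℕ}

theorem card_filter_outDeg_eq_sum_dcm (hin : ∀ v ∈ G.verts, G.inDeg v ∈ J) (i : ℕ) :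
    #{v ∈ G.verts | G.outDeg v = i} = ∑ j ∈ J, G.dcm i j :=
  card_filter_eq_sum_card_filter_and _ hin

theorem card_filter_inDeg_eq_sum_dcm (hout : ∀ v ∈ G.verts, G.outDeg v ∈ I) (j : ℕ) :
    #{v ∈ G.verts | G.inDeg v = j} = ∑ i ∈ I, G.dcm i j :=
  card_filter_eq_sum_card_filter_and_left _ hout

theorem sum_jdm_row (hin : ∀ v ∈ G.verts, G.inDeg v ∈ J) (i : ℕ) :
    ∑ j ∈ J, G.jdm i j = i * ∑ j ∈ J, G.dcm i j :=
  calc ∑ j ∈ J, G.jdm i j = #{e ∈ G.edges | G.outDeg e.1 = i} := sum_blockCount_right hin _ i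
    _ = ∑ v ∈ G.verts with G.outDeg v = i, G.outDeg v := (G.sum_outDeg_filter _ i).symm
    _ = #{v ∈ G.verts | G.outDeg v = i} * i := sum_const_nat fun _ hv => (mem_filter.1 hv).2
    _ = i * ∑ j ∈ J, G.dcm i j := by rw [mul_comm, card_filter_outDeg_eq_sum_dcm hin]

theorem sum_jdm_col (hout : ∀ v ∈ G.verts, G.outDeg v ∈ I) (j : ℕ) :
    ∑ i ∈ I, G.jdm i j = j * ∑ i ∈ I, G.dcm i j :=
  calc ∑ i ∈ I, G.jdm i j = #{e ∈ G.edges | G.inDeg e.2 = j} := sum_blockCount_left hout _ j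
    _ = ∑ v ∈ G.verts with G.inDeg v = j, G.inDeg v := (G.sum_inDeg_filter _ j).symm
    _ = #{v ∈ G.verts | G.inDeg v = j} * j := sum_const_nat fun _ hv => (mem_filter.1 hv).2
    _ = j * ∑ i ∈ I, G.dcm i j := by rw [mul_comm, card_filter_inDeg_eq_sum_dcm hout]

theorem jdm_add_dcm_le (hout : ∀ v ∈ G.verts, G.outDeg v ∈ I)
    (hin : ∀ v ∈ G.verts, G.inDeg v ∈ J) (i j : ℕ) :
    G.jdm i j + G.dcm i j ≤ (∑ j' ∈ J, G.dcm i j') * ∑ i' ∈ I, G.dcm i' j := by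
  rw [← card_filter_outDeg_eq_sum_dcm hin, ← card_filter_inDeg_eq_sum_dcm hout,
    ← card_filter_offDiag_add_card_filter]
  exact Nat.add_le_add_right (card_le_card (filter_subset_filter _ G.edges_subset_offDiag)) _

end Necessity

/-- Condition (1) of the theorem, for a labelling `f` in place of the out-degrees. -/
def IsOutBalanced (G : FinDigraph) (f : ℕ → ℕ) : Prop :=
  ∀ v ∈ G.verts, #{e ∈ G.edges | f e.1 = f v} = f v * #{u ∈ G.verts | f u = f v}

def IsInBalanced (G : FinDigraph) (g : ℕ → ℕ) : Prop :=
  ∀ v ∈ G.verts, #{e ∈ G.edges | g e.2 = g v} = g v * #{u ∈ G.verts | g u = g v}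

def outExcess (G : FinDigraph) (f : ℕ → ℕ) : ℕ :=
  ∑ v ∈ G.verts, (G.outDeg v - f v)

def tailLabels (G : FinDigraph) (f : ℕ → ℕ) : Multiset (ℕ × ℕ) :=
  G.edges.val.map fun e => (f e.1, e.2)

def headLabels (G : FinDigraph) (g : ℕ → ℕ) : Multiset (ℕ × ℕ) :=
  G.edges.val.map fun e => (e.1, g e.2)

theorem isOutBalanced_reverse {g : ℕ → ℕ} : G.reverse.IsOutBalanced g ↔ G.IsInBalanced g :=
  forall₂_congr fun v _ => by rw [card_filter_reverse_edges]; rfl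

theorem exists_edge_of_outDeg_add_one_lt {v v' : ℕ} (h : G.outDeg v' + 1 < G.outDeg v) :
    ∃ w, (v, w) ∈ G.edges ∧ (v', w) ∉ G.edges ∧ v' ≠ w := by
  let N : ℕ → Finset ℕ := fun x => {e ∈ G.edges | e.1 = x}.image Prod.snd
  have hN (x : ℕ) : #(N x) = G.outDeg x := card_image_of_injOn fun e he e' he' h =>
    Prod.ext ((mem_filter.1 he).2.trans (mem_filter.1 he').2.symm) h
  obtain ⟨w, hw, hw'⟩ := exists_mem_notMem_of_card_lt_card (s := insert v' (N v')) (t := N v)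
    ((card_insert_le _ _).trans_lt (by rw [hN, hN]; exact h))
  simp only [mem_image, mem_filter, Prod.exists, exists_eq_right, mem_insert, not_or, N]
    at hw hw'
  exact ⟨w, hw, hw'.2, Ne.symm hw'.1⟩

variable {f g : ℕ → ℕ}

theorem IsOutBalanced.of_tailLabels_eq {G' : FinDigraph} (hG : G.IsOutBalanced f)
    (hV : G'.verts = G.verts) (hmap : G'.tailLabels f = G.tailLabels f) :
    G'.IsOutBalanced f := fun v hv => by
  rw [hV] at hv ⊢
  exact (card_filter_eq_of_map_eq hmap fun x => x.1 = f v).trans (hG v hv)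

theorem IsInBalanced.of_tailLabels_eq {G' : FinDigraph} (hG : G.IsInBalanced g)
    (hV : G'.verts = G.verts) (hmap : G'.tailLabels f = G.tailLabels f) :
    G'.IsInBalanced g := fun v hv => by
  rw [hV] at hv ⊢
  exact (card_filter_eq_of_map_eq hmap fun x => g x.2 = g v).trans (hG v hv)

theorem IsOutBalanced.sum_outDeg_eq (hG : G.IsOutBalanced f) {v : ℕ} (hv : v ∈ G.verts) :
    ∑ u ∈ G.verts with f u = f v, G.outDeg u = ∑ u ∈ G.verts with f u = f v, f u := by
  rw [sum_outDeg_filter, hG v hv, sum_const_nat fun u hu => (mem_filter.1 hu).2, mul_comm]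

theorem IsOutBalanced.outDeg_eq_of_outExcess_eq_zero (hG : G.IsOutBalanced f)
    (h0 : G.outExcess f = 0) {v : ℕ} (hv : v ∈ G.verts) : G.outDeg v = f v := by
  have hle (u : ℕ) (hu : u ∈ G.verts) : G.outDeg u ≤ f u :=
    Nat.sub_eq_zero_iff_le.1 (sum_eq_zero_iff.1 h0 u hu)
  exact (sum_eq_sum_iff_of_le fun u hu => hle u (mem_filter.1 hu).1).1 (hG.sum_outDeg_eq hv) v
    (mem_filter.2 ⟨hv, rfl⟩)

theorem IsOutBalanced.exists_outExcess_lt (hG : G.IsOutBalanced f) (h0 : G.outExcess f ≠ 0) :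
    ∃ G' : FinDigraph, G'.verts = G.verts ∧ G'.tailLabels f = G.tailLabels f ∧
      G'.outExcess f < G.outExcess f := by
  obtain ⟨v, hv, hvf⟩ : ∃ v ∈ G.verts, G.outDeg v - f v ≠ 0 :=
    exists_ne_zero_of_sum_ne_zero h0
  obtain ⟨v', hv', hfv', hv'f⟩ : ∃ v' ∈ G.verts, f v' = f v ∧ G.outDeg v' < f v := by
    by_contra! hge
    have hlt :
        ∑ u ∈ G.verts with f u = f v, f u < ∑ u ∈ G.verts with f u = f v, G.outDeg u :=
      sum_lt_sum (fun u hu => (mem_filter.1 hu).2 ▸ hge u (mem_filter.1 hu).1 (mem_filter.1 hu).2)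
        ⟨v, mem_filter.2 ⟨hv, rfl⟩, by omega⟩
    exact hlt.ne' (hG.sum_outDeg_eq hv)
  have hlt : G.outDeg v' + 1 < G.outDeg v := by omega
  obtain ⟨w, hvw, hv'w, hne⟩ := exists_edge_of_outDeg_add_one_lt hlt
  let G' := ofSubsetOffDiag G.verts (insert (v', w) (G.edges.erase (v, w)))
    (insert_subset (mem_offDiag.2 ⟨hv', (G.mem_verts _ hvw).2, hne⟩)
      ((erase_subset _ _).trans G.edges_subset_offDiag))
  have hdeg (u : ℕ) :
      G'.outDeg u + (if v = u then 1 else 0) = G.outDeg u + (if v' = u then 1 else 0) :=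
    card_filter_insert_erase_add (fun e : ℕ × ℕ => e.1 = u) hv'w hvw
  refine ⟨G', rfl, map_val_insert_erase _ hv'w hvw (by simp [hfv']),
    sum_lt_sum (fun u _ => ?_) ⟨v, hv, ?_⟩⟩
  · have := hdeg u
    split_ifs at this <;> subst_vars <;> omega
  · have := hdeg v
    split_ifs at this <;> subst_vars <;> omega

theorem IsOutBalanced.exists_outDeg_eq (hG : G.IsOutBalanced f) :
    ∃ G' : FinDigraph, G'.verts = G.verts ∧ G'.tailLabels f = G.tailLabels f ∧
      ∀ v ∈ G.verts, G'.outDeg v = f v := by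
  induction hk : G.outExcess f using Nat.strong_induction_on generalizing G with
  | _ k ih =>
  rcases eq_or_ne k 0 with rfl | hk0
  · exact ⟨G, rfl, rfl, fun v hv => hG.outDeg_eq_of_outExcess_eq_zero hk hv⟩
  obtain ⟨G₁, hV₁, hmap₁, hlt⟩ := hG.exists_outExcess_lt (hk ▸ hk0)
  obtain ⟨G₂, hV₂, hmap₂, hdeg⟩ := ih _ (hk ▸ hlt) (hG.of_tailLabels_eq hV₁ hmap₁) rfl
  exact ⟨G₂, hV₂.trans hV₁, hmap₂.trans hmap₁, hV₁ ▸ hdeg⟩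

theorem IsInBalanced.exists_inDeg_eq (hG : G.IsInBalanced g) :
    ∃ G' : FinDigraph, G'.verts = G.verts ∧ G'.headLabels g = G.headLabels g ∧
      ∀ v ∈ G.verts, G'.inDeg v = g v := by
  obtain ⟨H, hV, hmap, hdeg⟩ := (isOutBalanced_reverse.2 hG).exists_outDeg_eq
  refine ⟨H.reverse, hV, ?_, fun v hv => by rw [inDeg_reverse]; exact hdeg v hv⟩
  simpa [tailLabels, headLabels, reverse, Multiset.map_map, Function.comp_def] using
    congrArg (Multiset.map Prod.swap) hmap

theorem exists_outDeg_inDeg_eq (hf : G.IsOutBalanced f) (hg : G.IsInBalanced g) :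
    ∃ G' : FinDigraph, G'.verts = G.verts ∧
      (∀ i j, G'.blockCount f g i j = G.blockCount f g i j) ∧
      ∀ v ∈ G.verts, G'.outDeg v = f v ∧ G'.inDeg v = g v := by
  obtain ⟨G₁, hV₁, hmap₁, hout₁⟩ := hf.exists_outDeg_eq
  obtain ⟨G₂, hV₂, hmap₂, hin₂⟩ := (hg.of_tailLabels_eq hV₁ hmap₁).exists_inDeg_eq
  refine ⟨G₂, hV₂.trans hV₁, fun i j => ?_, fun v hv => ⟨?_, hin₂ v (hV₁ ▸ hv)⟩⟩
  · exact (card_filter_eq_of_map_eq hmap₂ fun x => f x.1 = i ∧ x.2 = j).trans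
      (card_filter_eq_of_map_eq hmap₁ fun x => x.1 = i ∧ g x.2 = j)
  · exact (card_filter_eq_of_map_eq hmap₂ fun x => x.1 = v).trans (hout₁ v hv)

theorem exists_blockCount_eq {V I J : Finset ℕ} {f g : ℕ → ℕ} {A : ℕ → ℕ → ℕ}
    (hcap : ∀ i ∈ I, ∀ j ∈ J,
      A i j + #{v ∈ V | f v = i ∧ g v = j} ≤ #{v ∈ V | f v = i} * #{v ∈ V | g v = j}) :
    ∃ G : FinDigraph, G.verts = V ∧ ∀ i ∈ I, ∀ j ∈ J, G.blockCount f g i j = A i j := by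
  -- Thanks to `min`, `C` exists for all `i j`; by `hcap`, `#(C i j) = A i j` on `I ×ˢ J`.
  choose C hC hCcard using fun i j =>
    exists_subset_card_eq (min_le_right (A i j) #{e ∈ V.offDiag | f e.1 = i ∧ g e.2 = j})
  have hE : (I ×ˢ J).biUnion (fun p => C p.1 p.2) ⊆ V.offDiag :=
    biUnion_subset.2 fun p _ => (hC _ _).trans (filter_subset _ _)
  refine ⟨ofSubsetOffDiag V _ hE, rfl, fun i hi j hj => ?_⟩
  have hblock :
      {e ∈ (I ×ˢ J).biUnion (fun p => C p.1 p.2) | f e.1 = i ∧ g e.2 = j} = C i j := by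
    ext e
    simp only [mem_filter, mem_biUnion, mem_product]
    constructor
    · rintro ⟨⟨p, -, he⟩, rfl, rfl⟩
      obtain ⟨h1, h2⟩ := (mem_filter.1 (hC _ _ he)).2
      rwa [h1, h2]
    · exact fun he => ⟨⟨(i, j), ⟨hi, hj⟩, he⟩, (mem_filter.1 (hC _ _ he)).2⟩
  rw [blockCount, ofSubsetOffDiag, hblock, hCcard, min_eq_left]
  have := card_filter_offDiag_add_card_filter (s := V) f g i j
  have := hcap i hi j hj
  omega

theorem exists_jdm_eq {V I J : Finset ℕ} {f g : ℕ → ℕ} {A : ℕ → ℕ → ℕ}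
    (hfg : ∀ v ∈ V, f v ∈ I ∧ g v ∈ J)
    (hrow : ∀ v ∈ V, ∑ j ∈ J, A (f v) j = f v * #{u ∈ V | f u = f v})
    (hcol : ∀ v ∈ V, ∑ i ∈ I, A i (g v) = g v * #{u ∈ V | g u = g v})
    (hcap : ∀ i ∈ I, ∀ j ∈ J,
      A i j + #{v ∈ V | f v = i ∧ g v = j} ≤ #{v ∈ V | f v = i} * #{v ∈ V | g v = j}) :
    ∃ G : FinDigraph, G.verts = V ∧ (∀ v ∈ V, G.outDeg v = f v ∧ G.inDeg v = g v) ∧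
      ∀ i ∈ I, ∀ j ∈ J, G.jdm i j = A i j := by
  obtain ⟨G₀, rfl, hA⟩ := exists_blockCount_eq hcap
  have hf : G₀.IsOutBalanced f := fun v hv => by
    rw [← sum_blockCount_right (fun u hu => (hfg u hu).2) f (f v), ← hrow v hv]
    exact sum_congr rfl fun j hj => hA _ (hfg v hv).1 j hj
  have hg : G₀.IsInBalanced g := fun v hv => by
    rw [← sum_blockCount_left (fun u hu => (hfg u hu).1) g (g v), ← hcol v hv]
    exact sum_congr rfl fun i hi => hA i hi _ (hfg v hv).2
  obtain ⟨G, hV, hblock, hdeg⟩ := exists_outDeg_inDeg_eq hf hg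
  refine ⟨G, hV, hdeg, fun i hi j hj => ?_⟩
  rw [jdm_eq_blockCount_of_degrees (hV ▸ hdeg), hblock, hA i hi j hj]

end FinDigraph

theorem exists_labelled_finset (I J : Finset ℕ) (B : ℕ → ℕ → ℕ) :
    ∃ (V : Finset ℕ) (f g : ℕ → ℕ), (∀ v ∈ V, f v ∈ I ∧ g v ∈ J) ∧
      ∀ i ∈ I, ∀ j ∈ J, #{v ∈ V | f v = i ∧ g v = j} = B i j := by
  let V := (I ×ˢ J).biUnion fun p => (range (B p.1 p.2)).image (Nat.pair (Nat.pair p.1 p.2))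
  refine ⟨V, fun v => v.unpair.1.unpair.1, fun v => v.unpair.1.unpair.2, fun v hv => ?_,
    fun i hi j hj => ?_⟩
  · obtain ⟨i, hi, j, hj, k, -, rfl⟩ := by simpa [V] using hv
    simpa using ⟨hi, hj⟩
  · have hclass : {v ∈ V | v.unpair.1.unpair.1 = i ∧ v.unpair.1.unpair.2 = j}
        = (range (B i j)).image (Nat.pair (Nat.pair i j)) := by
      ext v
      simp only [V, mem_filter, mem_biUnion, mem_product, mem_image, mem_range]
      constructor
      · rintro ⟨⟨p, -, k, hk, rfl⟩, rfl, rfl⟩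
        exact ⟨k, by simpa using hk, by simp⟩
      · rintro ⟨k, hk, rfl⟩
        exact ⟨⟨(i, j), ⟨hi, hj⟩, k, hk, rfl⟩, by simp⟩
    rw [hclass, card_image_of_injective _ fun _ _ h => (Nat.pair_eq_pair.1 h).2, card_range]

/-- D2K realizability condition: given `m × n` matrices
`A B : ℕ → ℕ → ℕ` (indexed by `i ∈ {1,…,m}`, `j ∈ {1,…,n}`), there exists a
finite simple directed graph `G` whose joint degree matrix is `A` and whose
degree correlation matrix is `B` (every vertex having out-degree in `{1,…,m}`
and in-degree in `{1,…,n}`) if and only if for all `i ∈ {1,…,m}`,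
`j ∈ {1,…,n}`:
(1) `Σ_{j'} A i j' = i * Σ_{j'} B i j'`,
(2) `Σ_{i'} A i' j = j * Σ_{i'} B i' j`, and
(3) `A i j + B i j ≤ (Σ_{j'} B i j') * (Σ_{i'} B i' j)`. -/
theorem d2k_condition (m n : ℕ) (A B : ℕ → ℕ → ℕ) :
    (∃ G : FinDigraph,
      (∀ v ∈ G.verts, G.outDeg v ∈ Finset.Icc 1 m ∧ G.inDeg v ∈ Finset.Icc 1 n) ∧
      (∀ i ∈ Finset.Icc 1 m, ∀ j ∈ Finset.Icc 1 n,
        G.dcm i j = B i j ∧ G.jdm i j = A i j))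
    ↔
    (∀ i ∈ Finset.Icc 1 m, ∀ j ∈ Finset.Icc 1 n,
      (∑ j' ∈ Finset.Icc 1 n, A i j' = i * ∑ j' ∈ Finset.Icc 1 n, B i j') ∧
      (∑ i' ∈ Finset.Icc 1 m, A i' j = j * ∑ i' ∈ Finset.Icc 1 m, B i' j) ∧
      (A i j + B i j
        ≤ (∑ j' ∈ Finset.Icc 1 n, B i j') * (∑ i' ∈ Finset.Icc 1 m, B i' j))) := by
  constructor
  · rintro ⟨G, hdeg, hmat⟩ i hi j hj
    have hA (i) (hi : i ∈ Icc 1 m) (j) (hj : j ∈ Icc 1 n) : A i j = G.jdm i j :=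
      (hmat i hi j hj).2.symm
    have hB (i) (hi : i ∈ Icc 1 m) (j) (hj : j ∈ Icc 1 n) : B i j = G.dcm i j :=
      (hmat i hi j hj).1.symm
    rw [sum_congr rfl (hA i hi), sum_congr rfl fun i' hi' => hA i' hi' j hj,
      sum_congr rfl (hB i hi), sum_congr rfl fun i' hi' => hB i' hi' j hj, hA i hi j hj,
      hB i hi j hj]
    have hout (v) (hv : v ∈ G.verts) := (hdeg v hv).1
    have hin (v) (hv : v ∈ G.verts) := (hdeg v hv).2
    exact ⟨G.sum_jdm_row hin i, G.sum_jdm_col hout j, G.jdm_add_dcm_le hout hin i j⟩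
  · intro h
    obtain ⟨V, f, g, hfg, hB⟩ := exists_labelled_finset (Icc 1 m) (Icc 1 n) B
    have hrow (i) (hi : i ∈ Icc 1 m) : #{v ∈ V | f v = i} = ∑ j ∈ Icc 1 n, B i j := by
      rw [card_filter_eq_sum_card_filter_and _ fun v hv => (hfg v hv).2]
      exact sum_congr rfl (hB i hi)
    have hcol (j) (hj : j ∈ Icc 1 n) : #{v ∈ V | g v = j} = ∑ i ∈ Icc 1 m, B i j := by
      rw [card_filter_eq_sum_card_filter_and_left _ fun v hv => (hfg v hv).1]
      exact sum_congr rfl fun i hi => hB i hi j hj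
    obtain ⟨G, rfl, hdeg, hA⟩ := FinDigraph.exists_jdm_eq hfg
      (fun v hv => by rw [hrow _ (hfg v hv).1]; exact (h _ (hfg v hv).1 _ (hfg v hv).2).1)
      (fun v hv => by rw [hcol _ (hfg v hv).2]; exact (h _ (hfg v hv).1 _ (hfg v hv).2).2.1)
      (fun i hi j hj => by rw [hB i hi j hj, hrow i hi, hcol j hj]; exact (h i hi j hj).2.2)
    refine ⟨G, fun v hv => ?_, fun i hi j hj => ⟨?_, hA i hi j hj⟩⟩
    · rw [(hdeg v hv).1, (hdeg v hv).2]
      exact hfg v hv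
    · rw [G.dcm_eq_of_degrees hdeg, hB i hi j hj]
end

section
/- For every finite simple directed graph G (no self-loops) and all nonnegative integers i, j, the joint degree matrix entry and degree correlation matrix entry satisfy a_{ij} + b_{ij} ≤ |V_{i,out}|·|V_{j,in}|. -/
open Finset

theorem Finset.card_add_card_inter_le_card_mul {α : Type*} [DecidableEq α]
    {S : Finset (α × α)} {A B : Finset α} (hS : S ⊆ A ×ˢ B) (hirrefl : ∀ e ∈ S, e.1 ≠ e.2) :
    #S + #(A ∩ B) ≤ #A * #B := by
  have hdisj : Disjoint S (A ∩ B).diag :=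
    disjoint_left.mpr fun e heS hediag => hirrefl e heS (mem_diag.mp hediag).2
  have hdiag : (A ∩ B).diag ⊆ A ×ˢ B := by
    rintro ⟨a, b⟩ he
    obtain ⟨hAB, rfl : a = b⟩ := mem_diag.mp he
    exact mem_product.mpr (mem_inter.mp hAB)
  calc #S + #(A ∩ B) = #(S ∪ (A ∩ B).diag) := by
        rw [card_union_of_disjoint hdisj, diag_card]
    _ ≤ #(A ×ˢ B) := card_le_card (union_subset hS hdiag)
    _ = #A * #B := card_product A B

namespace FinDigraph

theorem dcm_eq_card_inter (G : FinDigraph) (i j : ℕ) :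
    G.dcm i j = #({v ∈ G.verts | G.outDeg v = i} ∩ {v ∈ G.verts | G.inDeg v = j}) := by
  rw [dcm, filter_and]

theorem edges_filter_deg_subset_product (G : FinDigraph) (i j : ℕ) :
    {e ∈ G.edges | G.outDeg e.1 = i ∧ G.inDeg e.2 = j} ⊆
      {v ∈ G.verts | G.outDeg v = i} ×ˢ {v ∈ G.verts | G.inDeg v = j} := by
  intro e he
  obtain ⟨he, hout, hin⟩ := mem_filter.mp he
  obtain ⟨h₁, h₂⟩ := G.mem_verts e he
  exact mem_product.mpr ⟨mem_filter.mpr ⟨h₁, hout⟩, mem_filter.mpr ⟨h₂, hin⟩⟩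

end FinDigraph

/-- for every finite simple directed graph and all `i j : ℕ`,
`a i j + b i j ≤ |V_{i,out}| * |V_{j,in}|`. -/
theorem jdm_add_dcm_le (G : FinDigraph) (i j : ℕ) :
    G.jdm i j + G.dcm i j
      ≤ (G.verts.filter (fun v => G.outDeg v = i)).card *
        (G.verts.filter (fun v => G.inDeg v = j)).card := by
  rw [G.dcm_eq_card_inter]
  exact card_add_card_inter_le_card_mul (G.edges_filter_deg_subset_product i j)
    fun e he => G.no_loops e (mem_filter.mp he).1
end

section
/- (Sparsity-refined floor-plus-adjustment deviation bound, inequality (25)) Let x_{ij} ≥ 0 be real numbers indexed by i = 1,…,m and j = 1,…,n, set z_{ij} = ⌊x_{ij}⌋, let K be the number of pairs (i,j) with x_{ij} > 0, and let d_{ij} be integers with 0 ≤ d_{ij} ≤ p for a fixed integer p ≥ 0, such that d_{ij} = 0 whenever x_{ij} = 0. Fix indices (i₀,j₀) with x_{i₀j₀} > 0, and suppose K ≥ 2, Σ_{i,j} z_{ij} + Σ_{i,j} d_{ij} > 0, Σ_{i,j} x_{ij} + Kp − p − 1 > 0, Σ_{i,j} x_{ij} − x_{i₀j₀} > 0, and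 Σ_{i,j} x_{ij} + p − K + 1 > 0. Then (x_{i₀j₀} − 1) / (Σ_{i,j} x_{ij} + Kp − p − 1) < (z_{i₀j₀} + d_{i₀j₀}) / (Σ_{i,j} z_{ij} + Σ_{i,j} d_{ij}) < (x_{i₀j₀} + p) / (Σ_{i,j} x_{ij} + p − K + 1). (The deviation occurs only at nonzero entries, since ⌊0⌋ = 0 and d vanishes there, so the term mn in the unrefined bound can be replaced by K.) -/
/-!
Write `y = ⌊x⌋ + d`. On the support of `x` every entry satisfies `x - 1 < y ≤ x + p`, and off it
`x` and `y` both vanish, so all sums can be taken over the `K` positive entries. Splitting off the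
entry `q₀`, the remaining `K - 1` entries contribute between `Σ x - x q₀ - (K - 1)` and
`Σ x - x q₀ + (K - 1) p` to `Σ y`, and each bound on `y q₀ / Σ y` follows by comparing
`t ↦ t / (t + c)` at `y q₀` and at the corresponding endpoint `x q₀ - 1` or `x q₀ + p`.
-/

open Finset

section Ratio

variable {α : Type*} [Field α] [LinearOrder α] [IsStrictOrderedRing α]

theorem div_add_lt_div_add_of_lt_of_le {a v R A : α} (hv : 0 ≤ v) (hav : a < v) (hRA : R ≤ A)
    (hA : 0 < A) (haA : 0 < a + A) (hvR : 0 < v + R) : a / (a + A) < v / (v + R) :=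
  calc a / (a + A) < v / (v + A) := by
        rw [div_lt_div_iff₀ haA (by linarith)]
        nlinarith
    _ ≤ v / (v + R) := div_le_div_of_nonneg_left hv hvR (by linarith)

theorem div_add_lt_div_add_of_le_of_lt {v R b B : α} (hv : 0 ≤ v) (hR : 0 ≤ R) (hvb : v ≤ b)
    (hb : 0 < b) (hBR : B < R) (hvR : 0 < v + R) (hbB : 0 < b + B) :
    v / (v + R) < b / (b + B) := by
  rw [div_lt_div_iff₀ hvR hbB]
  rcases le_or_gt 0 B with hB | hB
  · nlinarith [mul_le_mul_of_nonneg_right hvb hB]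
  · rcases hv.eq_or_lt with rfl | hv
    · nlinarith
    · nlinarith [mul_neg_of_pos_of_neg hv hB]

end Ratio

section Sums

variable {ι α : Type*} {x y : ι → α}

section Ring

variable [Ring α] [LinearOrder α] [IsStrictOrderedRing α] {t : Finset ι}

theorem sum_le_sum_add_card_mul {p : α} (h : ∀ q ∈ t, y q ≤ x q + p) :
    ∑ q ∈ t, y q ≤ ∑ q ∈ t, x q + #t * p :=
  (sum_le_sum h).trans_eq (by rw [sum_add_distrib, sum_const, nsmul_eq_mul])

theorem sum_sub_card_lt_sum (ht : t.Nonempty) (h : ∀ q ∈ t, x q - 1 < y q) :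
    ∑ q ∈ t, x q - #t < ∑ q ∈ t, y q :=
  (sum_lt_sum_of_nonempty ht h).trans_eq' (by rw [sum_sub_distrib, sum_const, nsmul_one])

end Ring

variable [Field α] [LinearOrder α] [IsStrictOrderedRing α] [DecidableEq ι] {s : Finset ι} {q₀ : ι}

theorem sub_one_div_lt_div_sum {p : α} (hq₀ : q₀ ∈ s) (hp : 0 ≤ p) (hv : 0 ≤ y q₀)
    (hlt : x q₀ - 1 < y q₀) (hle : ∀ q ∈ s, y q ≤ x q + p) (hT : 0 < ∑ q ∈ s, y q)
    (hden : 0 < ∑ q ∈ s, x q + #s * p - p - 1) (hrest : 0 < ∑ q ∈ s, x q - x q₀) :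
    (x q₀ - 1) / (∑ q ∈ s, x q + #s * p - p - 1) < y q₀ / ∑ q ∈ s, y q := by
  rw [← add_sum_erase s x hq₀, add_sub_cancel_left] at hrest
  rw [← add_sum_erase s x hq₀, ← card_erase_add_one hq₀, Nat.cast_succ] at hden ⊢
  rw [← add_sum_erase s y hq₀] at hT ⊢
  have hR := sum_le_sum_add_card_mul (t := s.erase q₀) fun q hq => hle q (mem_of_mem_erase hq)
  convert div_add_lt_div_add_of_lt_of_le hv hlt hR (by positivity) (by linarith) hT using 2
  ring

theorem div_sum_lt_add_div {p : α} (hq₀ : q₀ ∈ s) (hb : 0 < x q₀ + p) (hy : ∀ q ∈ s, 0 ≤ y q)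
    (hlt : ∀ q ∈ s, x q - 1 < y q) (hle : y q₀ ≤ x q₀ + p) (hT : 0 < ∑ q ∈ s, y q)
    (hrest : 0 < ∑ q ∈ s, x q - x q₀) (hden : 0 < ∑ q ∈ s, x q + p - #s + 1) :
    y q₀ / ∑ q ∈ s, y q < (x q₀ + p) / (∑ q ∈ s, x q + p - #s + 1) := by
  rw [← add_sum_erase s x hq₀, add_sub_cancel_left] at hrest
  rw [← add_sum_erase s x hq₀, ← card_erase_add_one hq₀, Nat.cast_succ] at hden ⊢
  rw [← add_sum_erase s y hq₀] at hT ⊢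
  have hne : (s.erase q₀).Nonempty := nonempty_of_sum_ne_zero hrest.ne'
  have hR := sum_sub_card_lt_sum (t := s.erase q₀) hne fun q hq => hlt q (mem_of_mem_erase hq)
  have hR0 : 0 ≤ ∑ q ∈ s.erase q₀, y q := sum_nonneg fun q hq => hy q (mem_of_mem_erase hq)
  convert div_add_lt_div_add_of_le_of_lt (hy q₀ hq₀) hR0 hle hb hR hT (by linarith) using 2
  ring

end Sums

section Floor

variable {α : Type*} [Ring α] [LinearOrder α] [IsStrictOrderedRing α] [FloorRing α] {x : α} {d : ℤ}

theorem sub_one_lt_floor_add (hd : 0 ≤ d) : x - 1 < ⌊x⌋ + d :=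
  lt_add_of_lt_of_nonneg (Int.sub_one_lt_floor x) (Int.cast_nonneg hd)

theorem floor_add_le_add {p : ℤ} (hd : d ≤ p) : (⌊x⌋ + d : α) ≤ x + p :=
  add_le_add (Int.floor_le x) (Int.cast_le.2 hd)

end Floor

theorem Fintype.sum_sum_eq_sum_filter {α β M : Type*} [Fintype α] [Fintype β] [AddCommMonoid M]
    (P : α × β → Prop) [DecidablePred P] {f : α → β → M} (hf : ∀ i j, ¬ P (i, j) → f i j = 0) :
    ∑ i, ∑ j, f i j = ∑ q ∈ univ.filter P, f q.1 q.2 := by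
  rw [← Fintype.sum_prod_type', sum_filter_of_ne]
  exact fun q _ hq => by_contra fun hP => hq (hf q.1 q.2 hP)

theorem sparse_floor_adjustment_deviation_bound_general (m n : ℕ)
    (x : Fin m → Fin n → ℝ) (hx : ∀ i j, 0 ≤ x i j)
    (K : ℕ)
    (hK : K = (Finset.univ.filter
      (fun q : Fin m × Fin n => 0 < x q.1 q.2)).card)
    (d : Fin m → Fin n → ℤ) (p : ℤ)
    (hd : ∀ i j, 0 ≤ d i j ∧ d i j ≤ p)
    (hd0 : ∀ i j, x i j = 0 → d i j = 0)
    (i₀ : Fin m) (j₀ : Fin n) (hpos : 0 < x i₀ j₀)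
    (hzd : 0 < (∑ i, ∑ j, (⌊x i j⌋ : ℤ)) + ∑ i, ∑ j, d i j)
    (h1 : 0 < (∑ i, ∑ j, x i j) + (K : ℝ) * p - p - 1)
    (hrest : 0 < (∑ i, ∑ j, x i j) - x i₀ j₀)
    (h3 : 0 < (∑ i, ∑ j, x i j) + p - (K : ℝ) + 1) :
    (x i₀ j₀ - 1) / ((∑ i, ∑ j, x i j) + (K : ℝ) * p - p - 1)
        < ((⌊x i₀ j₀⌋ : ℝ) + (d i₀ j₀ : ℝ))
            / ((∑ i, ∑ j, (⌊x i j⌋ : ℝ)) + ∑ i, ∑ j, (d i j : ℝ)) ∧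
    ((⌊x i₀ j₀⌋ : ℝ) + (d i₀ j₀ : ℝ))
            / ((∑ i, ∑ j, (⌊x i j⌋ : ℝ)) + ∑ i, ∑ j, (d i j : ℝ))
        < (x i₀ j₀ + p) / ((∑ i, ∑ j, x i j) + p - (K : ℝ) + 1) := by
  classical
  set F := univ.filter (fun q : Fin m × Fin n => 0 < x q.1 q.2)
  have hzero : ∀ i j, ¬ 0 < x i j → x i j = 0 := fun i j h => le_antisymm (not_lt.1 h) (hx i j)
  have hS : ∑ i, ∑ j, x i j = ∑ q ∈ F, x q.1 q.2 := Fintype.sum_sum_eq_sum_filter _ hzero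
  have hT : (∑ i, ∑ j, (⌊x i j⌋ : ℝ)) + ∑ i, ∑ j, (d i j : ℝ)
      = ∑ q ∈ F, ((⌊x q.1 q.2⌋ : ℝ) + d q.1 q.2) := by
    simp only [← sum_add_distrib]
    refine Fintype.sum_sum_eq_sum_filter _ fun i j h => ?_
    simp [hzero i j h, hd0 i j (hzero i j h)]
  have hTpos : 0 < ∑ q ∈ F, ((⌊x q.1 q.2⌋ : ℝ) + d q.1 q.2) := by
    rw [← hT]; exact_mod_cast hzd
  have hq₀ : (i₀, j₀) ∈ F := by simp [F, hpos]
  have hp : (0 : ℝ) ≤ p := by exact_mod_cast (hd i₀ j₀).1.trans (hd i₀ j₀).2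
  have hlt (q) (_ : q ∈ F) := sub_one_lt_floor_add (x := x q.1 q.2) (hd q.1 q.2).1
  have hle (q) (_ : q ∈ F) := floor_add_le_add (x := x q.1 q.2) (hd q.1 q.2).2
  have hy (q) (_ : q ∈ F) : (0 : ℝ) ≤ (⌊x q.1 q.2⌋ : ℝ) + d q.1 q.2 := by
    exact_mod_cast add_nonneg (Int.floor_nonneg.2 (hx q.1 q.2)) (hd q.1 q.2).1
  subst hK
  rw [hS] at h1 hrest h3 ⊢
  rw [hT]
  exact ⟨sub_one_div_lt_div_sum hq₀ hp (hy _ hq₀) (hlt _ hq₀) hle hTpos h1 hrest,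
    div_sum_lt_add_div hq₀ (by linarith) hy hlt (hle _ hq₀) hTpos hrest h3⟩

/-- sparsity-refined floor-plus-adjustment deviation bound,
inequality (25): for nonnegative reals `x i j` (indexed by `Fin m × Fin n`),
`z i j = ⌊x i j⌋`, `K` the number of pairs `(i,j)` with `x i j > 0`, and
integers `d i j` with `0 ≤ d i j ≤ p` (for a fixed integer `p ≥ 0`) vanishing
wherever `x` vanishes, if `x i₀ j₀ > 0`, `K ≥ 2`, `Σ z + Σ d > 0`,
`Σ x + K p − p − 1 > 0`, `Σ x − x i₀ j₀ > 0` and `Σ x + p − K + 1 > 0`, then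
`(x i₀ j₀ − 1) / (Σ x + K p − p − 1)
  < (z i₀ j₀ + d i₀ j₀) / (Σ z + Σ d) < (x i₀ j₀ + p) / (Σ x + p − K + 1)`. -/
theorem sparse_floor_adjustment_deviation_bound (m n : ℕ)
    (x : Fin m → Fin n → ℝ) (hx : ∀ i j, 0 ≤ x i j)
    (K : ℕ)
    (hK : K = (Finset.univ.filter
      (fun q : Fin m × Fin n => 0 < x q.1 q.2)).card)
    (d : Fin m → Fin n → ℤ) (p : ℤ) (hp : 0 ≤ p)
    (hd : ∀ i j, 0 ≤ d i j ∧ d i j ≤ p)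
    (hd0 : ∀ i j, x i j = 0 → d i j = 0)
    (i₀ : Fin m) (j₀ : Fin n) (hpos : 0 < x i₀ j₀)
    (hK2 : 2 ≤ K)
    (hzd : 0 < (∑ i, ∑ j, (⌊x i j⌋ : ℤ)) + ∑ i, ∑ j, d i j)
    (h1 : 0 < (∑ i, ∑ j, x i j) + (K : ℝ) * p - p - 1)
    (hrest : 0 < (∑ i, ∑ j, x i j) - x i₀ j₀)
    (h3 : 0 < (∑ i, ∑ j, x i j) + p - (K : ℝ) + 1) :
    (x i₀ j₀ - 1) / ((∑ i, ∑ j, x i j) + (K : ℝ) * p - p - 1)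
        < ((⌊x i₀ j₀⌋ : ℝ) + (d i₀ j₀ : ℝ))
            / ((∑ i, ∑ j, (⌊x i j⌋ : ℝ)) + ∑ i, ∑ j, (d i j : ℝ)) ∧
    ((⌊x i₀ j₀⌋ : ℝ) + (d i₀ j₀ : ℝ))
            / ((∑ i, ∑ j, (⌊x i j⌋ : ℝ)) + ∑ i, ∑ j, (d i j : ℝ))
        < (x i₀ j₀ + p) / ((∑ i, ∑ j, x i j) + p - (K : ℝ) + 1) :=
  sparse_floor_adjustment_deviation_bound_general m n x hx K hK d p hd hd0 i₀ j₀ hpos hzd h1 hrest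
    h3
end
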